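/- arXiv:2601.18530 — 4 statements merged into one kernel-verified Lean document; each statement's English description precedes it below -/
import Mathlib

section
/- Let 𝓕 be a symmetric finite family of homeomorphisms of the circle S¹ admitting an exceptional minimal set K (a Cantor set with f(K) = K for all f ∈ 𝓕 and K equal to the closure of the 𝓕-orbit of every point of K) such that the 𝓕-orbit of every point of S¹ \ K is dense in S¹. Let h be a homeomorphism of S¹ such that h(K) strictly contains K and h has an attracting fixed point p ∈ S¹ \ K. Then the IFS 𝓕 ∪ {h} is minimal (the (𝓕 ∪ {h})-orbit of every point of S¹ is dense in S¹), while the IFS 𝓕₋ ∪ {h⁻¹} is not minimal. -/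
open Metric Set Filter

noncomputable section

/-- The circle `S¹ = ℝ/ℤ` with its standard metric. -/
abbrev Circle1 := AddCircle (1 : ℝ)

/-- The Hutchinson operator of a family `G` of homeomorphisms:
`A ↦ ⋃_{g ∈ G} g(A)`. -/
def hutch (G : Set (Circle1 ≃ₜ Circle1)) (A : Set Circle1) : Set Circle1 :=
  ⋃ g ∈ G, g '' A

/-- `d_F(x, y) = sup_{n ≥ 0} d_H(F^n({x}), F^n({y}))`, where `F` is the
Hutchinson operator of `G` and `d_H` is the Hausdorff distance. -/
noncomputable def dHutch (G : Set (Circle1 ≃ₜ Circle1)) (x y : Circle1) : ℝ :=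
  ⨆ n : ℕ, hausdorffDist ((hutch G)^[n] {x}) ((hutch G)^[n] {y})

/-- `x` is an equicontinuous point of the Hutchinson operator of `G`:
the identity `(X, d) → (X, d_F)` is continuous at `x`. -/
def IsEqcPoint (G : Set (Circle1 ≃ₜ Circle1)) (x : Circle1) : Prop :=
  ∀ ε > 0, ∃ δ > 0, ∀ y : Circle1, dist x y < δ → dHutch G x y < ε

/-- The Hutchinson operator of `G` is equicontinuous:
every point is an equicontinuous point. -/
def EquicontinuousHutch (G : Set (Circle1 ≃ₜ Circle1)) : Prop :=
  ∀ x : Circle1, IsEqcPoint G x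

/-- The Hutchinson operator of `G` is sensitive: there is `ε > 0` such that every
non-empty open set has `d_F`-diameter at least `ε`. -/
def SensitiveHutch (G : Set (Circle1 ≃ₜ Circle1)) : Prop :=
  ∃ ε > 0, ∀ U : Set Circle1, IsOpen U → U.Nonempty →
    ε ≤ sSup {r : ℝ | ∃ x ∈ U, ∃ y ∈ U, r = dHutch G x y}

/-- The `G`-orbit of `x`: all points `g_{ωₙ} ∘ ⋯ ∘ g_{ω₁} (x)` with each `g_{ωⱼ} ∈ G`
(including `x` itself, for `n = 0`). -/
def fOrbit (G : Set (Circle1 ≃ₜ Circle1)) (x : Circle1) : Set Circle1 :=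
  {y | ∃ l : List (Circle1 ≃ₜ Circle1), (∀ g ∈ l, g ∈ G) ∧ y = l.foldl (fun z g => g z) x}

/-- The family of inverses of the members of `G`. -/
def invFam (G : Set (Circle1 ≃ₜ Circle1)) : Set (Circle1 ≃ₜ Circle1) :=
  Homeomorph.symm '' G

/-- `S¹` is an attractor for the family `G`: `d_H(F^n(C), S¹) → 0` for every
non-empty compact set `C`. -/
def IsAttractor (G : Set (Circle1 ≃ₜ Circle1)) : Prop :=
  ∀ C : Set Circle1, IsCompact C → C.Nonempty →
    Tendsto (fun n => hausdorffDist ((hutch G)^[n] C) Set.univ) atTop (nhds 0)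

/-- A Cantor set in `S¹`: non-empty, compact, perfect and totally disconnected. -/
def IsCantorIn (K : Set Circle1) : Prop :=
  K.Nonempty ∧ IsCompact K ∧ Perfect K ∧ IsTotallyDisconnected K

/-!
Points off `K` already have dense `𝓕`-orbits. The `𝓕`-orbit of a point of `K` is dense in `K`,
so it meets the open set `h⁻¹(S¹ ∖ K)`, which is non-empty because `h(K) ⊄ K`; one more
application of `h` then leaves `K`, and from there the `𝓕`-orbit is dense.

Conversely, `K ⊆ h(K)` and `f(K) = K` say exactly that `h⁻¹` and every `f⁻¹` map `K` into
itself, so orbits of the inverse system starting in `K` stay in the closed proper subset `K`.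
-/

lemma fOrbit_mono {G G' : Set (Circle1 ≃ₜ Circle1)} (hGG' : G ⊆ G') (x : Circle1) :
    fOrbit G x ⊆ fOrbit G' x := by
  rintro y ⟨l, hl, rfl⟩
  exact ⟨l, fun g hg => hGG' (hl g hg), rfl⟩

lemma fOrbit_subset_of_mem {G : Set (Circle1 ≃ₜ Circle1)} {x y : Circle1}
    (hy : y ∈ fOrbit G x) : fOrbit G y ⊆ fOrbit G x := by
  obtain ⟨l₁, hl₁, rfl⟩ := hy
  rintro z ⟨l₂, hl₂, rfl⟩
  refine ⟨l₁ ++ l₂, fun g hg => ?_, List.foldl_append.symm⟩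
  rcases List.mem_append.mp hg with hg | hg
  exacts [hl₁ g hg, hl₂ g hg]

lemma apply_mem_fOrbit {G : Set (Circle1 ≃ₜ Circle1)} {x y : Circle1}
    {g : Circle1 ≃ₜ Circle1} (hy : y ∈ fOrbit G x) (hg : g ∈ G) : g y ∈ fOrbit G x := by
  obtain ⟨l, hl, rfl⟩ := hy
  refine ⟨l ++ [g], fun g' hg' => ?_, by simp⟩
  rcases List.mem_append.mp hg' with hg' | hg'
  · exact hl g' hg'
  · rwa [List.mem_singleton.mp hg']

lemma Dense.fOrbit_of_mem {G : Set (Circle1 ≃ₜ Circle1)} {x y : Circle1}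
    (hy : y ∈ fOrbit G x) (hd : Dense (fOrbit G y)) : Dense (fOrbit G x) :=
  hd.mono (fOrbit_subset_of_mem hy)

lemma fOrbit_subset_of_mapsTo {G : Set (Circle1 ≃ₜ Circle1)} {K : Set Circle1}
    (hG : ∀ g ∈ G, MapsTo g K K) {x : Circle1} (hx : x ∈ K) : fOrbit G x ⊆ K := by
  rintro _ ⟨l, hl, rfl⟩
  induction l generalizing x with
  | nil => exact hx
  | cons g l ih =>
    exact ih (hG g (hl g List.mem_cons_self) hx)
      (fun g' hg' => hl g' (List.mem_cons_of_mem g hg'))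

lemma Homeomorph.mapsTo_symm_of_subset_image {X : Type*} [TopologicalSpace X] {K : Set X}
    {g : X ≃ₜ X} (hK : K ⊆ g '' K) : MapsTo g.symm K K := by
  rwa [mapsTo_iff_subset_preimage, Homeomorph.preimage_symm]

theorem dense_fOrbit_union_singleton {G : Set (Circle1 ≃ₜ Circle1)} {K : Set Circle1}
    (hmin : ∀ x ∈ K, closure (fOrbit G x) = K) (hdense : ∀ x ∉ K, Dense (fOrbit G x))
    {h : Circle1 ≃ₜ Circle1} (hh : ¬ MapsTo h K K) (x : Circle1) :
    Dense (fOrbit (G ∪ {h}) x) := by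
  have hG : G ⊆ G ∪ {h} := subset_union_left
  by_cases hx : x ∈ K
  · obtain ⟨k, hk, hhk⟩ := not_forall₂.mp hh
    have hKc : IsClosed K := hmin x hx ▸ isClosed_closure
    have hk' : k ∈ closure (fOrbit G x) := (hmin x hx).symm ▸ hk
    obtain ⟨y, hyK, hy⟩ := mem_closure_iff.mp hk' _
      (hKc.isOpen_compl.preimage h.continuous) hhk
    have hhy : h y ∈ fOrbit (G ∪ {h}) x :=
      apply_mem_fOrbit (fOrbit_mono hG x hy) (mem_union_right _ rfl)
    exact Dense.fOrbit_of_mem hhy ((hdense _ hyK).mono (fOrbit_mono hG _))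
  · exact (hdense x hx).mono (fOrbit_mono hG x)

theorem not_dense_fOrbit_of_mapsTo {G : Set (Circle1 ≃ₜ Circle1)} {K : Set Circle1}
    (hKc : IsClosed K) (hK : K ≠ univ) (hG : ∀ g ∈ G, MapsTo g K K) {x : Circle1}
    (hx : x ∈ K) : ¬ Dense (fOrbit G x) := fun hd =>
  hK <| univ_subset_iff.mp <| hd.closure_eq ▸
    hKc.closure_subset_iff.mpr (fOrbit_subset_of_mapsTo hG hx)

theorem stmt3_general (G : Set (Circle1 ≃ₜ Circle1))
    (K : Set Circle1) (hK : IsCantorIn K)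
    (hinv : ∀ f ∈ G, f '' K = K)
    (hmin : ∀ x ∈ K, closure (fOrbit G x) = K)
    (hdense : ∀ x ∉ K, Dense (fOrbit G x))
    (h : Circle1 ≃ₜ Circle1) (hKh : K ⊂ h '' K)
    (p : Circle1) (hp : p ∉ K) :
    (∀ x : Circle1, Dense (fOrbit (G ∪ {h}) x)) ∧
      ¬ (∀ x : Circle1, Dense (fOrbit (invFam G ∪ {h.symm}) x)) := by
  obtain ⟨_, ⟨k, hk, rfl⟩, hhk⟩ := exists_of_ssubset hKh
  refine ⟨dense_fOrbit_union_singleton hmin hdense fun hmaps => hhk (hmaps hk), fun hall => ?_⟩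
  have hmaps : ∀ g ∈ invFam G ∪ {h.symm}, MapsTo g K K := by
    rintro _ (⟨f, hf, rfl⟩ | rfl)
    · exact Homeomorph.mapsTo_symm_of_subset_image (hinv f hf).ge
    · exact Homeomorph.mapsTo_symm_of_subset_image hKh.subset
  obtain ⟨x, hx⟩ := hK.1
  exact not_dense_fOrbit_of_mapsTo hK.2.1.isClosed (fun hKu => hp (hKu ▸ mem_univ p)) hmaps hx
    (hall x)

/-- Adjoining to such a symmetric family a homeomorphism `h` with `h(K) ⊋ K` and an
attracting fixed point `p ∉ K` yields a minimal IFS `𝓕 ∪ {h}`, whereas the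
inverse IFS `𝓕₋ ∪ {h⁻¹}` is not minimal. -/
theorem stmt3 (G : Set (Circle1 ≃ₜ Circle1)) (hfin : G.Finite)
    (hsymm : ∀ f ∈ G, f.symm ∈ G)
    (K : Set Circle1) (hK : IsCantorIn K)
    (hinv : ∀ f ∈ G, f '' K = K)
    (hmin : ∀ x ∈ K, closure (fOrbit G x) = K)
    (hdense : ∀ x ∉ K, Dense (fOrbit G x))
    (h : Circle1 ≃ₜ Circle1) (hKh : K ⊂ h '' K)
    (p : Circle1) (hp : p ∉ K) (hfix : h p = p)
    (hattr : ∃ U ∈ nhds p, ∀ x ∈ U, Tendsto (fun n => (⇑h)^[n] x) atTop (nhds p)) :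
    (∀ x : Circle1, Dense (fOrbit (G ∪ {h}) x)) ∧
      ¬ (∀ x : Circle1, Dense (fOrbit (invFam G ∪ {h.symm}) x)) :=
  stmt3_general G K hK hinv hmin hdense h hKh p hp
end
end

section
/- Let 𝓕 be a symmetric finite family of homeomorphisms of the circle S¹ admitting an exceptional minimal set K (a Cantor set with f(K) = K for all f ∈ 𝓕 and K equal to the closure of the 𝓕-orbit of every point of K) such that the 𝓕-orbit of every point of S¹ \ K is dense in S¹, and let h be a homeomorphism of S¹ such that h(K) strictly contains K and h has an attracting fixed point p ∈ S¹ \ K. Then the Hutchinson operator of the IFS 𝓕 ∪ {h} is equicontinuous, and S¹ is an attractor for 𝓕 ∪ {h}: for every non-empty compact set C ⊆ S¹, d_H(G^n(C), S¹) → 0 as n → ∞, where G is the Hutchinson operator of 𝓕 ∪ {h}. -/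
open Metric Set Filter

noncomputable section

/-!
Every orbit of `G ∪ {h}` is dense: orbits off `K` already are, and the closure of an orbit in
`K` contains a point `k ∈ K` with `h k ∉ K`, whose `G`-orbit is dense. So from any `x` a fixed
word leads, uniformly for `y` near `x`, into a small neighbourhood of the fixed point `p`. There
one can wait any number of steps with words acting as the identity (`g g⁻¹ ⋯`) or as `h`, and then
apply one of finitely many words whose images of `p` form an `ε`-net. Hence for all large `n` the
`n`-th iterates of singletons near `x` are uniformly `ε`-dense. This gives the attractor property
at once, and equicontinuity because the finitely many shorter words are equicontinuous at `x`.
-/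

open Topology

section Words

variable {X : Type*} [TopologicalSpace X]

/-- A word `[g₁, …, gₙ]` acts as `gₙ ∘ ⋯ ∘ g₁`, the order used in `fOrbit`. -/
def evalWord (l : List (X ≃ₜ X)) (x : X) : X :=
  l.foldl (fun z g => g z) x

@[simp]
lemma evalWord_nil : evalWord ([] : List (X ≃ₜ X)) = id := rfl

@[simp]
lemma evalWord_cons (g : X ≃ₜ X) (l : List (X ≃ₜ X)) (x : X) :
    evalWord (g :: l) x = evalWord l (g x) := rfl

@[simp]
lemma evalWord_append (l₁ l₂ : List (X ≃ₜ X)) (x : X) :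
    evalWord (l₁ ++ l₂) x = evalWord l₂ (evalWord l₁ x) :=
  List.foldl_append

lemma evalWord_replicate (n : ℕ) (g : X ≃ₜ X) : evalWord (List.replicate n g) = (⇑g)^[n] := by
  funext x
  induction n generalizing x with
  | zero => rfl
  | succ n ih => rw [List.replicate_succ, evalWord_cons, ih, Function.iterate_succ_apply]

lemma continuous_evalWord (l : List (X ≃ₜ X)) : Continuous (evalWord l) := by
  induction l with
  | nil => exact continuous_id
  | cons g l ih => exact ih.comp g.continuous

def words (F : Set (X ≃ₜ X)) (n : ℕ) : Set (List (X ≃ₜ X)) :=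
  {l | (∀ g ∈ l, g ∈ F) ∧ l.length = n}

lemma words_zero (F : Set (X ≃ₜ X)) : words F 0 = {[]} := by
  ext l
  simp +contextual [words]

lemma words_succ (F : Set (X ≃ₜ X)) (n : ℕ) :
    words F (n + 1) = image2 List.cons F (words F n) := by
  ext l
  cases l <;> simp [words, and_assoc]

lemma words_finite {F : Set (X ≃ₜ X)} (hF : F.Finite) (n : ℕ) : (words F n).Finite := by
  induction n with
  | zero => simp [words_zero]
  | succ n ih => simpa only [words_succ] using hF.image2 _ ih

lemma exists_mem_words_evalWord_eq {F : Set (X ≃ₜ X)} {g h : X ≃ₜ X} (hg : g ∈ F)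
    (hg' : g.symm ∈ F) (hh : h ∈ F) (r : ℕ) :
    ∃ w ∈ words F r, evalWord w = id ∨ evalWord w = h := by
  have hpad (k : ℕ) : List.replicate k g ++ List.replicate k g.symm ∈ words F (2 * k) ∧
      evalWord (List.replicate k g ++ List.replicate k g.symm) = id := by
    refine ⟨⟨?_, by simp [two_mul]⟩, funext fun x => ?_⟩
    · simp only [List.mem_append, List.mem_replicate]
      rintro _ (⟨-, rfl⟩ | ⟨-, rfl⟩) <;> assumption
    · simpa [evalWord_replicate] using g.left_inv.iterate k x
  obtain ⟨k, rfl | rfl⟩ := Nat.even_or_odd' r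
  · exact ⟨_, (hpad k).1, Or.inl (hpad k).2⟩
  · obtain ⟨⟨hmem, hlen⟩, hid⟩ := hpad k
    refine ⟨h :: (List.replicate k g ++ List.replicate k g.symm), ⟨?_, by simp [hlen]⟩,
      Or.inr (funext fun x => by simp only [evalWord_cons, hid, id])⟩
    simpa [hh] using hmem

end Words

section Hausdorff

variable {α ι : Type*} [PseudoMetricSpace α]

lemma hausdorffDist_image_le {f g : ι → α} {S : Set ι} {ε : ℝ} (hε : 0 ≤ ε)
    (hfg : ∀ i ∈ S, dist (f i) (g i) ≤ ε) : hausdorffDist (f '' S) (g '' S) ≤ ε := by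
  refine hausdorffDist_le_of_mem_dist hε ?_ ?_
  · rintro _ ⟨i, hi, rfl⟩
    exact ⟨g i, mem_image_of_mem g hi, hfg i hi⟩
  · rintro _ ⟨i, hi, rfl⟩
    exact ⟨f i, mem_image_of_mem f hi, dist_comm (g i) (f i) ▸ hfg i hi⟩

lemma hausdorffDist_le_of_univ_subset_thickening {A B : Set α} {ε : ℝ} (hε : 0 ≤ ε)
    (hA : univ ⊆ thickening ε A) (hB : univ ⊆ thickening ε B) : hausdorffDist A B ≤ ε := by
  refine hausdorffDist_le_of_mem_dist hε (fun a _ => ?_) (fun b _ => ?_)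
  · obtain ⟨b, hb, hab⟩ := mem_thickening_iff.1 (hB (mem_univ a))
    exact ⟨b, hb, hab.le⟩
  · obtain ⟨a, ha, hba⟩ := mem_thickening_iff.1 (hA (mem_univ b))
    exact ⟨a, ha, hba.le⟩

end Hausdorff

section Hutchinson

lemma hutch_eq_image2 (F : Set (Circle1 ≃ₜ Circle1)) (A : Set Circle1) :
    hutch F A = image2 (fun g x => g x) F A :=
  iUnion_image_left _

lemma monotone_hutch (F : Set (Circle1 ≃ₜ Circle1)) : Monotone (hutch F) :=
  fun _ _ hAB => biUnion_mono subset_rfl fun _ _ => image_mono hAB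

lemma iterate_hutch_eq_image2 (F : Set (Circle1 ≃ₜ Circle1)) (n : ℕ) (A : Set Circle1) :
    (hutch F)^[n] A = image2 evalWord (words F n) A := by
  induction n generalizing A with
  | zero => simp [words_zero]
  | succ n ih =>
    rw [Function.iterate_succ_apply, ih, hutch_eq_image2, words_succ]
    ext z
    simp only [mem_image2]
    constructor
    · rintro ⟨l, hl, _, ⟨g, hg, a, ha, rfl⟩, rfl⟩
      exact ⟨g :: l, ⟨g, hg, l, hl, rfl⟩, a, ha, rfl⟩
    · rintro ⟨_, ⟨g, hg, l, hl, rfl⟩, a, ha, rfl⟩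
      exact ⟨l, hl, g a, ⟨g, hg, a, ha, rfl⟩, rfl⟩

lemma iterate_hutch_singleton (F : Set (Circle1 ≃ₜ Circle1)) (n : ℕ) (x : Circle1) :
    (hutch F)^[n] {x} = (evalWord · x) '' words F n := by
  rw [iterate_hutch_eq_image2, image2_singleton_right]

lemma eventually_hausdorffDist_iterate_hutch_le {F : Set (Circle1 ≃ₜ Circle1)} (hF : F.Finite)
    (x : Circle1) (n : ℕ) {ε : ℝ} (hε : 0 < ε) :
    ∀ᶠ y in 𝓝 x, hausdorffDist ((hutch F)^[n] {x}) ((hutch F)^[n] {y}) ≤ ε := by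
  have hwords : ∀ᶠ y in 𝓝 x, ∀ l ∈ words F n, evalWord l y ∈ closedBall (evalWord l x) ε :=
    (words_finite hF n).eventually_all.2 fun l _ =>
      (continuous_evalWord l).continuousAt.eventually (closedBall_mem_nhds _ hε)
  filter_upwards [hwords] with y hy
  rw [iterate_hutch_singleton, iterate_hutch_singleton]
  exact hausdorffDist_image_le hε.le fun l hl => dist_comm (evalWord l y) _ ▸ hy l hl

end Hutchinson

section Orbits

variable {F G : Set (Circle1 ≃ₜ Circle1)} {x y : Circle1}

lemma mem_fOrbit_iff : y ∈ fOrbit F x ↔ ∃ l, (∀ g ∈ l, g ∈ F) ∧ evalWord l x = y :=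
  exists_congr fun _ => and_congr_right' eq_comm

lemma fOrbit_mono_s4 (hGF : G ⊆ F) (x : Circle1) : fOrbit G x ⊆ fOrbit F x := by
  rintro _ ⟨l, hl, rfl⟩
  exact ⟨l, fun g hg => hGF (hl g hg), rfl⟩

lemma evalWord_mem_fOrbit {l : List (Circle1 ≃ₜ Circle1)} (hy : y ∈ fOrbit F x)
    (hl : ∀ g ∈ l, g ∈ F) : evalWord l y ∈ fOrbit F x := by
  obtain ⟨l', hl', rfl⟩ := mem_fOrbit_iff.1 hy
  exact mem_fOrbit_iff.2 ⟨l' ++ l, List.forall_mem_append.2 ⟨hl', hl⟩, evalWord_append l' l x⟩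

lemma fOrbit_subset_closure_fOrbit (hy : y ∈ closure (fOrbit F x)) :
    fOrbit F y ⊆ closure (fOrbit F x) := by
  intro z hz
  obtain ⟨l, hl, rfl⟩ := mem_fOrbit_iff.1 hz
  exact map_mem_closure (continuous_evalWord l) hy fun z hz => evalWord_mem_fOrbit hz hl

lemma fOrbit_empty (x : Circle1) : fOrbit ∅ x = {x} := by
  ext y
  simp only [mem_fOrbit_iff, mem_empty_iff_false, imp_false, mem_singleton_iff]
  constructor
  · rintro ⟨l, hl, rfl⟩
    rw [List.eq_nil_iff_forall_not_mem.2 hl, evalWord_nil, id]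
  · rintro rfl
    exact ⟨[], fun _ => List.not_mem_nil, rfl⟩

instance : Nontrivial Circle1 :=
  ⟨⟨((0 : ℝ) : Circle1), ((1 / 2 : ℝ) : Circle1), by
    rw [Ne, AddCircle.coe_eq_coe_iff_of_mem_Ico (a := 0)] <;> norm_num⟩⟩

lemma nonempty_of_dense_fOrbit (hx : Dense (fOrbit F x)) : F.Nonempty := by
  rw [nonempty_iff_ne_empty]
  rintro rfl
  obtain ⟨y, hyx⟩ := exists_ne x
  simpa [fOrbit_empty, hyx] using hx y

lemma dense_fOrbit_union {K : Set Circle1} {h : Circle1 ≃ₜ Circle1}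
    (hmin : ∀ x ∈ K, closure (fOrbit G x) = K) (hdense : ∀ x ∉ K, Dense (fOrbit G x))
    (hKh : K ⊂ h '' K) (x : Circle1) : Dense (fOrbit (G ∪ {h}) x) := by
  have hsub (y : Circle1) : fOrbit G y ⊆ fOrbit (G ∪ {h}) y := fOrbit_mono_s4 subset_union_left y
  by_cases hx : x ∈ K
  · obtain ⟨_, ⟨k, hk, rfl⟩, hhk⟩ := exists_of_ssubset hKh
    have hk' : k ∈ closure (fOrbit (G ∪ {h}) x) := closure_mono (hsub x) (hmin x hx ▸ hk)
    have hhk' : h k ∈ closure (fOrbit (G ∪ {h}) x) :=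
      fOrbit_subset_closure_fOrbit hk' ⟨[h], by simp, rfl⟩
    exact (((hdense _ hhk).mono (hsub _)).mono (fOrbit_subset_closure_fOrbit hhk')).of_closure
  · exact (hdense x hx).mono (hsub x)

end Orbits

section EventuallyDense

variable {F : Set (Circle1 ≃ₜ Circle1)}

def HutchEventuallyDenseAt (F : Set (Circle1 ≃ₜ Circle1)) (x : Circle1) : Prop :=
  ∀ ε > 0, ∃ N, ∀ᶠ y in 𝓝 x, ∀ n ≥ N, univ ⊆ thickening ε ((hutch F)^[n] {y})

lemma exists_finite_net_of_dense_fOrbit {p : Circle1} (hp : Dense (fOrbit F p)) {ε : ℝ}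
    (hε : 0 < ε) :
    ∃ S : Set (List (Circle1 ≃ₜ Circle1)), S.Finite ∧ (∀ l ∈ S, ∀ g ∈ l, g ∈ F) ∧
      ∃ V ∈ 𝓝 p, ∀ t, ∃ l ∈ S, MapsTo (evalWord l) V (ball t ε) := by
  have hcover : univ ⊆ ⋃ l ∈ {l | ∀ g ∈ l, g ∈ F}, ball (evalWord l p) (ε / 2) := fun t _ => by
    obtain ⟨_, ⟨l, hl, rfl⟩, htl⟩ := Metric.mem_closure_iff.1 (hp t) _ (half_pos hε)
    exact mem_biUnion hl htl
  obtain ⟨S, hSF, hSfin, hS⟩ :=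
    isCompact_univ.elim_finite_subcover_image (fun _ _ => isOpen_ball) hcover
  have hV : ∀ᶠ z in 𝓝 p, ∀ l ∈ S, evalWord l z ∈ ball (evalWord l p) (ε / 2) :=
    hSfin.eventually_all.2 fun l _ =>
      (continuous_evalWord l).continuousAt.eventually (ball_mem_nhds _ (half_pos hε))
  refine ⟨S, hSfin, hSF, _, hV, fun t => ?_⟩
  obtain ⟨l, hl, htl⟩ := mem_iUnion₂.1 (hS (mem_univ t))
  refine ⟨l, hl, fun z hz => ?_⟩
  calc dist (evalWord l z) t ≤ dist (evalWord l z) (evalWord l p) + dist t (evalWord l p) :=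
        dist_triangle_right _ _ _
    _ < ε / 2 + ε / 2 := add_lt_add (hz l hl) htl
    _ = ε := add_halves ε

lemma hutchEventuallyDenseAt_of_mem_closure_fOrbit {g h : Circle1 ≃ₜ Circle1} {p x : Circle1}
    (hg : g ∈ F) (hg' : g.symm ∈ F) (hh : h ∈ F) (hfix : h p = p) (hp : Dense (fOrbit F p))
    (hx : p ∈ closure (fOrbit F x)) : HutchEventuallyDenseAt F x := by
  intro ε hε
  obtain ⟨S, hSfin, hSF, V, hV, hnet⟩ := exists_finite_net_of_dense_fOrbit hp hε
  obtain ⟨M, hM⟩ := (hSfin.image List.length).bddAbove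
  have hVh : V ∩ h ⁻¹' V ∈ 𝓝 p :=
    inter_mem hV (h.continuous.continuousAt.preimage_mem_nhds (by rwa [hfix]))
  obtain ⟨U, hUV, hUo, hpU⟩ := _root_.mem_nhds_iff.1 hVh
  obtain ⟨_, hzU, hz⟩ := mem_closure_iff.1 hx U hUo hpU
  obtain ⟨la, hla, rfl⟩ := mem_fOrbit_iff.1 hz
  refine ⟨la.length + M, ?_⟩
  filter_upwards [(continuous_evalWord la).continuousAt.eventually (hUo.mem_nhds hzU)]
    with y hy n hn t _
  obtain ⟨l, hlS, hl⟩ := hnet t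
  have hlM : l.length ≤ M := hM (mem_image_of_mem _ hlS)
  obtain ⟨w, ⟨hwF, hwlen⟩, hw⟩ :=
    exists_mem_words_evalWord_eq hg hg' hh (n - la.length - l.length)
  have hwV : evalWord w (evalWord la y) ∈ V := by
    obtain ⟨hyV, hhyV⟩ := hUV hy
    rcases hw with hw | hw <;> rw [hw]
    exacts [hyV, hhyV]
  rw [iterate_hutch_singleton]
  -- `la` leads into `U`, `w` keeps the point in `V`, and `l` then lands `ε`-close to `t`
  refine mem_thickening_iff.2 ⟨evalWord (la ++ w ++ l) y, ⟨la ++ w ++ l, ⟨?_, ?_⟩, rfl⟩, ?_⟩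
  · simp only [List.forall_mem_append]
    exact ⟨⟨hla, hwF⟩, hSF l hlS⟩
  · simp only [List.length_append]
    omega
  · rw [dist_comm, evalWord_append, evalWord_append]
    exact hl hwV

end EventuallyDense

lemma equicontinuousHutch_of_forall_hutchEventuallyDenseAt {F : Set (Circle1 ≃ₜ Circle1)}
    (hF : F.Finite) (hdense : ∀ x, HutchEventuallyDenseAt F x) : EquicontinuousHutch F := by
  intro x ε hε
  obtain ⟨N, hN⟩ := hdense x (ε / 2) (half_pos hε)
  have hsmall : ∀ᶠ y in 𝓝 x, ∀ n ∈ Iio N,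
      hausdorffDist ((hutch F)^[n] {x}) ((hutch F)^[n] {y}) ≤ ε / 2 :=
    (finite_Iio N).eventually_all.2 fun n _ =>
      eventually_hausdorffDist_iterate_hutch_le hF x n (half_pos hε)
  obtain ⟨δ, hδ, hy⟩ := Metric.eventually_nhds_iff.1 (hN.and hsmall)
  refine ⟨δ, hδ, fun y hxy => ?_⟩
  obtain ⟨hNy, hsmall_y⟩ := hy (dist_comm x y ▸ hxy)
  have hbound (n : ℕ) : hausdorffDist ((hutch F)^[n] {x}) ((hutch F)^[n] {y}) ≤ ε / 2 := by
    rcases lt_or_ge n N with hn | hn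
    · exact hsmall_y n hn
    · exact hausdorffDist_le_of_univ_subset_thickening (half_pos hε).le
        (hN.self_of_nhds n hn) (hNy n hn)
  exact (ciSup_le hbound).trans_lt (half_lt_self hε)

lemma isAttractor_of_forall_hutchEventuallyDenseAt {F : Set (Circle1 ≃ₜ Circle1)}
    (hdense : ∀ x, HutchEventuallyDenseAt F x) : IsAttractor F := by
  rintro C - ⟨c, hc⟩
  refine Metric.tendsto_atTop.2 fun ε hε => ?_
  obtain ⟨N, hN⟩ := hdense c (ε / 2) (half_pos hε)
  refine ⟨N, fun n hn => ?_⟩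
  have hCn : univ ⊆ thickening (ε / 2) ((hutch F)^[n] C) :=
    (hN.self_of_nhds n hn).trans (thickening_subset_of_subset _
      ((monotone_hutch F).iterate n (singleton_subset_iff.2 hc)))
  have hle : hausdorffDist ((hutch F)^[n] C) univ ≤ ε / 2 :=
    hausdorffDist_le_of_univ_subset_thickening (half_pos hε).le hCn
      (self_subset_thickening (half_pos hε) _)
  rw [Real.dist_eq, sub_zero, abs_of_nonneg hausdorffDist_nonneg]
  exact hle.trans_lt (half_lt_self hε)

theorem stmt4_general (G : Set (Circle1 ≃ₜ Circle1)) (hfin : G.Finite)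
    (hsymm : ∀ f ∈ G, f.symm ∈ G)
    (K : Set Circle1)
    (hmin : ∀ x ∈ K, closure (fOrbit G x) = K)
    (hdense : ∀ x ∉ K, Dense (fOrbit G x))
    (h : Circle1 ≃ₜ Circle1) (hKh : K ⊂ h '' K)
    (p : Circle1) (hp : p ∉ K) (hfix : h p = p) :
    EquicontinuousHutch (G ∪ {h}) ∧ IsAttractor (G ∪ {h}) := by
  obtain ⟨g, hg⟩ := nonempty_of_dense_fOrbit (hdense p hp)
  have horbit : ∀ x, Dense (fOrbit (G ∪ {h}) x) := dense_fOrbit_union hmin hdense hKh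
  have hF (x : Circle1) : HutchEventuallyDenseAt (G ∪ {h}) x :=
    hutchEventuallyDenseAt_of_mem_closure_fOrbit (Or.inl hg) (Or.inl (hsymm g hg))
      (Or.inr rfl) hfix (horbit p) (horbit x p)
  exact ⟨equicontinuousHutch_of_forall_hutchEventuallyDenseAt (hfin.union (finite_singleton h)) hF,
    isAttractor_of_forall_hutchEventuallyDenseAt hF⟩

/-- In the same situation, the Hutchinson operator of `𝓕 ∪ {h}` is equicontinuous
and `S¹` is an attractor for `𝓕 ∪ {h}`. -/
theorem stmt4 (G : Set (Circle1 ≃ₜ Circle1)) (hfin : G.Finite)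
    (hsymm : ∀ f ∈ G, f.symm ∈ G)
    (K : Set Circle1) (hK : IsCantorIn K)
    (hinv : ∀ f ∈ G, f '' K = K)
    (hmin : ∀ x ∈ K, closure (fOrbit G x) = K)
    (hdense : ∀ x ∉ K, Dense (fOrbit G x))
    (h : Circle1 ≃ₜ Circle1) (hKh : K ⊂ h '' K)
    (p : Circle1) (hp : p ∉ K) (hfix : h p = p)
    (hattr : ∃ U ∈ nhds p, ∀ x ∈ U, Tendsto (fun n => (⇑h)^[n] x) atTop (nhds p)) :
    EquicontinuousHutch (G ∪ {h}) ∧ IsAttractor (G ∪ {h}) :=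
  stmt4_general G hfin hsymm K hmin hdense h hKh p hp hfix
end
end

section
/- Let f₁ = R_α be the rotation of S¹ = ℝ/ℤ by an irrational angle α, and let f₂, f₃, f₄ be the piecewise linear circle homeomorphisms with breakpoints: f₂ through (0,0), (1/4, 1/8), (1/2, 1/2), (1,1); f₃ through (0,0), (5/8, 5/8), (3/4, 7/8), (1,1); f₄ through (0,0), (1/2, 1/2), (5/8, 3/4), (7/8, 7/8), (1,1). Then S¹ is an attractor for the IFS 𝓕 = {f₁, f₂, f₃, f₄}: for every non-empty compact set C ⊆ S¹, d_H(F^n(C), S¹) → 0 as n → ∞, where F is the Hutchinson operator of 𝓕 and d_H the Hausdorff distance. -/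
open Metric Set Filter

noncomputable section

/-- Lift (on the fundamental domain `[0,1]`) of the piecewise linear homeomorphism `f₂`
with breakpoints `(0,0), (1/4, 1/8), (1/2, 1/2), (1,1)`. -/
def pl2 (x : ℝ) : ℝ :=
  if x ≤ 1/4 then x/2 else if x ≤ 1/2 then 3/2 * x - 1/4 else x

/-- Lift (on the fundamental domain `[0,1]`) of the piecewise linear homeomorphism `f₃`
with breakpoints `(0,0), (5/8, 5/8), (3/4, 7/8), (1,1)`. -/
def pl3 (x : ℝ) : ℝ :=
  if x ≤ 5/8 then x else if x ≤ 3/4 then 2 * x - 5/8 else x/2 + 1/2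

/-- Lift (on the fundamental domain `[0,1]`) of the piecewise linear homeomorphism `f₄`
with breakpoints `(0,0), (1/2, 1/2), (5/8, 3/4), (7/8, 7/8), (1,1)`. -/
def pl4 (x : ℝ) : ℝ :=
  if x ≤ 1/2 then x else if x ≤ 5/8 then 2 * x - 1/2
  else if x ≤ 7/8 then x/2 + 7/16 else x

/-! Every point of the circle is fixed by `f₂` (on `[1/2, 1]`) or by `f₄` (on `[0, 1/2]`), so
`A ⊆ F(A)` and the iterates `F^n(C)` increase. For `x ∈ C`, `F^k(C)` contains `x + kα`, and the
forward orbit of an irrational rotation is dense; by compactness finitely many of its points are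
already `ε`-dense, hence so is `F^n(C)` for all large `n`. -/

namespace Circle1

lemma exists_coe_eq_of_mem_Ico (z : Circle1) : ∃ r ∈ Ico (0 : ℝ) 1, (r : Circle1) = z := by
  simpa using (AddCircle.coe_image_Ico_eq (1 : ℝ) 0).ge (mem_univ z)

lemma denseRange_add_nsmul {α : ℝ} (hα : Irrational α) (x : Circle1) :
    DenseRange fun k : ℕ => x + k • (α : Circle1) := by
  have hmul : DenseRange fun k : ℕ => k • (α : Circle1) :=
    denseRange_zsmul_iff_nsmul.1 (AddCircle.denseRange_zsmul_coe_iff.2 (by simpa using hα))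
  exact (Homeomorph.addLeft x).surjective.denseRange.comp hmul (Homeomorph.addLeft x).continuous

end Circle1

section Hutchinson

variable {G : Set (Circle1 ≃ₜ Circle1)}

lemma iterate_mem_hutch_iterate {g : Circle1 ≃ₜ Circle1} (hg : g ∈ G) {A : Set Circle1}
    {x : Circle1} (hx : x ∈ A) (k : ℕ) : g^[k] x ∈ (hutch G)^[k] A := by
  induction k with
  | zero => exact hx
  | succ k ih =>
    rw [Function.iterate_succ_apply', Function.iterate_succ_apply']
    exact mem_biUnion hg (mem_image_of_mem g ih)

lemma subset_hutch (hfix : ∀ x, ∃ f ∈ G, f x = x) (A : Set Circle1) : A ⊆ hutch G A := by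
  intro x hx
  obtain ⟨g, hg, hgx⟩ := hfix x
  exact mem_biUnion hg ⟨x, hx, hgx⟩

lemma monotone_hutch_iterate (hfix : ∀ x, ∃ f ∈ G, f x = x) (A : Set Circle1) :
    Monotone fun n => (hutch G)^[n] A :=
  monotone_nat_of_le_succ fun n => by
    rw [Function.iterate_succ_apply']
    exact subset_hutch hfix _

theorem isAttractor_of_denseRange_iterate {g : Circle1 ≃ₜ Circle1} (hg : g ∈ G)
    (hdense : ∀ x, DenseRange fun k : ℕ => g^[k] x) (hfix : ∀ x, ∃ f ∈ G, f x = x) :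
    IsAttractor G := by
  rintro C - ⟨x, hx⟩
  rw [Metric.tendsto_atTop]
  intro ε hε
  have hcover : univ ⊆ ⋃ k : ℕ, ball (g^[k] x) (ε / 2) := fun w _ =>
    let ⟨k, hk⟩ := (hdense x).exists_dist_lt w (half_pos hε)
    mem_iUnion.2 ⟨k, mem_ball.2 hk⟩
  obtain ⟨s, hs⟩ := isCompact_univ.elim_finite_subcover _ (fun _ => isOpen_ball) hcover
  refine ⟨s.sup id, fun n hn => ?_⟩
  have hclose : hausdorffDist ((hutch G)^[n] C) univ ≤ ε / 2 := by
    refine hausdorffDist_le_of_mem_dist (half_pos hε).le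
      (fun a _ => ⟨a, mem_univ a, by rw [dist_self]; positivity⟩) fun w _ => ?_
    obtain ⟨k, hks, hwk⟩ := mem_iUnion₂.1 (hs (mem_univ w))
    exact ⟨g^[k] x, monotone_hutch_iterate hfix C ((s.le_sup (f := id) hks).trans hn)
      (iterate_mem_hutch_iterate hg hx k), (mem_ball.1 hwk).le⟩
  rw [dist_zero_right, Real.norm_of_nonneg hausdorffDist_nonneg]
  linarith

end Hutchinson

lemma pl2_eq_self {x : ℝ} (hx : 1 / 2 ≤ x) : pl2 x = x := by
  unfold pl2
  split_ifs <;> linarith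

lemma pl4_eq_self {x : ℝ} (hx : x ≤ 1 / 2) : pl4 x = x :=
  if_pos hx

theorem stmt7_general (α : ℝ) (hα : Irrational α)
    (f₁ f₂ f₃ f₄ : Circle1 ≃ₜ Circle1)
    (hf₁ : ∀ z : Circle1, f₁ z = z + (α : Circle1))
    (hf₂ : ∀ x ∈ Icc (0:ℝ) 1, f₂ (x : Circle1) = ((pl2 x : ℝ) : Circle1))
    (hf₄ : ∀ x ∈ Icc (0:ℝ) 1, f₄ (x : Circle1) = ((pl4 x : ℝ) : Circle1)) :
    IsAttractor {f₁, f₂, f₃, f₄} := by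
  have hrot : ⇑f₁ = (· + (α : Circle1)) := funext hf₁
  refine isAttractor_of_denseRange_iterate (g := f₁) (by simp) (fun x => ?_) fun z => ?_
  · simpa only [hrot, add_right_iterate] using Circle1.denseRange_add_nsmul hα x
  · obtain ⟨r, ⟨hr0, hr1⟩, rfl⟩ := Circle1.exists_coe_eq_of_mem_Ico z
    rcases le_total r (1 / 2) with h | h
    · exact ⟨f₄, by simp, by rw [hf₄ r ⟨hr0, hr1.le⟩, pl4_eq_self h]⟩
    · exact ⟨f₂, by simp, by rw [hf₂ r ⟨hr0, hr1.le⟩, pl2_eq_self h]⟩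

/-- For `f₁` an irrational rotation and `f₂, f₃, f₄` the piecewise linear circle
homeomorphisms with the given breakpoints, `S¹` is an attractor for
`𝓕 = {f₁, f₂, f₃, f₄}`. -/
theorem stmt7 (α : ℝ) (hα : Irrational α)
    (f₁ f₂ f₃ f₄ : Circle1 ≃ₜ Circle1)
    (hf₁ : ∀ z : Circle1, f₁ z = z + (α : Circle1))
    (hf₂ : ∀ x ∈ Icc (0:ℝ) 1, f₂ (x : Circle1) = ((pl2 x : ℝ) : Circle1))
    (hf₃ : ∀ x ∈ Icc (0:ℝ) 1, f₃ (x : Circle1) = ((pl3 x : ℝ) : Circle1))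
    (hf₄ : ∀ x ∈ Icc (0:ℝ) 1, f₄ (x : Circle1) = ((pl4 x : ℝ) : Circle1)) :
    IsAttractor {f₁, f₂, f₃, f₄} :=
  stmt7_general α hα f₁ f₂ f₃ f₄ hf₁ hf₂ hf₄
end
end

section
/- Let f₁ = R_α be the rotation of S¹ = ℝ/ℤ by an irrational angle α, and let f₂, f₃, f₄ be the piecewise linear circle homeomorphisms with breakpoints: f₂ through (0,0), (1/4, 1/8), (1/2, 1/2), (1,1); f₃ through (0,0), (5/8, 5/8), (3/4, 7/8), (1,1); f₄ through (0,0), (1/2, 1/2), (5/8, 3/4), (7/8, 7/8), (1,1). Then both the Hutchinson operator F of 𝓕 = {f₁, f₂, f₃, f₄} and the Hutchinson operator F₋ of 𝓕₋ = {f₁⁻¹, f₂⁻¹, f₃⁻¹, f₄⁻¹} are equicontinuous: every point of S¹ is an equicontinuous point of F and of F₋. -/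
open Metric Set Filter

noncomputable section

/-!
Every member of `𝓕` and of `𝓕₋` is `2`-Lipschitz (the piecewise linear maps have slopes in
`[1/2, 2]`), so `d_H(Fⁿ{x}, Fⁿ{y}) ≤ 2ⁿ d(x, y)`. On the other hand every point of the circle
is fixed by `f₂` or by `f₃`, so `Fⁿ{x}` contains `x + kα` for all `k ≤ n`. By minimality of the
irrational rotation these points form an `ε`-net once `n ≥ N(ε)`, and then `Fⁿ{x}` and `Fⁿ{y}`
are `ε`-close. The first `N` steps are controlled by the Lipschitz bound.
-/

lemma dist_coe_le_abs (x y : ℝ) : dist (x : Circle1) (y : Circle1) ≤ |x - y| := by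
  rw [dist_eq_norm, ← AddCircle.coe_sub]
  exact QuotientAddGroup.norm_mk_le_norm

lemma exists_intCast_dist_coe_eq (x y : ℝ) :
    ∃ m : ℤ, dist (x : Circle1) (y : Circle1) = |x + m - y| :=
  ⟨-round (x - y), by
    rw [dist_eq_norm, ← AddCircle.coe_sub, UnitAddCircle.norm_eq]; push_cast; ring_nf⟩

lemma coe_add_intCast (x : ℝ) (m : ℤ) : ((x + m : ℝ) : Circle1) = x := by
  simp

lemma lipschitzWith_of_lift {K : NNReal} {f : Circle1 → Circle1} {P : ℝ → ℝ}
    (hf : ∀ x : ℝ, f x = P x) (hK : LipschitzWith K P) : LipschitzWith K f := by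
  refine LipschitzWith.of_dist_le_mul fun a b => ?_
  induction a using QuotientAddGroup.induction_on with | H u => ?_
  induction b using QuotientAddGroup.induction_on with | H v => ?_
  obtain ⟨m, hm⟩ := exists_intCast_dist_coe_eq u v
  calc dist (f u) (f v) = dist (f (u + m : ℝ)) (f v) := by rw [coe_add_intCast]
    _ ≤ |P (u + m) - P v| := by rw [hf, hf]; exact dist_coe_le_abs _ _
    _ ≤ K * |u + m - v| := by simpa [Real.dist_eq] using hK.dist_le_mul (u + m) v
    _ = K * dist (u : Circle1) (v : Circle1) := by rw [hm]

lemma antilipschitzWith_of_lift {K : NNReal} {f : Circle1 → Circle1} {P : ℝ → ℝ}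
    (hf : ∀ x : ℝ, f x = P x) (hP : ∀ (x : ℝ) (m : ℤ), P (x + m) = P x + m)
    (hK : AntilipschitzWith K P) : AntilipschitzWith K f := by
  refine AntilipschitzWith.of_le_mul_dist fun a b => ?_
  induction a using QuotientAddGroup.induction_on with | H u => ?_
  induction b using QuotientAddGroup.induction_on with | H v => ?_
  obtain ⟨m, hm⟩ := exists_intCast_dist_coe_eq (P u) (P v)
  calc dist (u : Circle1) (v : Circle1) = dist ((u + m : ℝ) : Circle1) v := by
        rw [coe_add_intCast]
    _ ≤ |u + m - v| := dist_coe_le_abs _ _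
    _ ≤ K * |P (u + m) - P v| := by simpa [Real.dist_eq] using hK.le_mul_dist (u + m) v
    _ = K * dist (f u) (f v) := by rw [hf, hf, hm, hP]

lemma abs_sub_le_mul_of_monotone {K : ℝ} (hK : 0 < K) {P : ℝ → ℝ}
    (h₁ : Monotone fun x => K * x - P x) (h₂ : Monotone fun x => K * P x - x) (u v : ℝ) :
    |P u - P v| ≤ K * |u - v| ∧ |u - v| ≤ K * |P u - P v| := by
  wlog huv : u ≤ v generalizing u v
  · rw [abs_sub_comm (P u), abs_sub_comm u]
    exact this v u (le_of_not_ge huv)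
  have hx := h₁ huv
  have hPx := h₂ huv
  simp only at hx hPx
  have hPuv : P u ≤ P v := by nlinarith
  rw [abs_of_nonpos (sub_nonpos.2 huv), abs_of_nonpos (sub_nonpos.2 hPuv)]
  constructor <;> linarith

def circleLift (q : ℝ → ℝ) (x : ℝ) : ℝ := ⌊x⌋ + q (Int.fract x)

lemma circleLift_add_intCast (q : ℝ → ℝ) (x : ℝ) (m : ℤ) :
    circleLift q (x + m) = circleLift q x + m := by
  simp only [circleLift, Int.floor_add_intCast, Int.fract_add_intCast]; push_cast; ring

lemma apply_coe_eq_circleLift {f : Circle1 → Circle1} {q : ℝ → ℝ}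
    (hf : ∀ x ∈ Icc (0 : ℝ) 1, f x = q x) (x : ℝ) : f x = circleLift q x := by
  rw [← AddCircle.coe_fract, hf _ ⟨Int.fract_nonneg x, (Int.fract_lt_one x).le⟩, circleLift,
    add_comm, coe_add_intCast]

lemma monotone_circleLift {q : ℝ → ℝ} (hq : MonotoneOn q (Ico 0 1))
    (hq₁ : ∀ t ∈ Ico (0 : ℝ) 1, q t ≤ q 0 + 1) : Monotone (circleLift q) := by
  intro u v huv
  have hu : Int.fract u ∈ Ico (0 : ℝ) 1 := ⟨Int.fract_nonneg u, Int.fract_lt_one u⟩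
  have hv : Int.fract v ∈ Ico (0 : ℝ) 1 := ⟨Int.fract_nonneg v, Int.fract_lt_one v⟩
  rcases (Int.floor_mono huv).lt_or_eq with hlt | heq
  · have hfloor : (⌊u⌋ : ℝ) + 1 ≤ ⌊v⌋ := by exact_mod_cast hlt
    have hq₀ : q 0 ≤ q (Int.fract v) := hq ⟨le_rfl, zero_lt_one⟩ hv hv.1
    rw [circleLift, circleLift]
    linarith [hq₁ _ hu]
  · have hfract : Int.fract u ≤ Int.fract v := by
      rw [Int.fract, Int.fract, heq]; linarith
    rw [circleLift, circleLift, heq]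
    linarith [hq hu hv hfract]

theorem lipschitzWith_two_of_slopes {f : Circle1 ≃ₜ Circle1} {q : ℝ → ℝ}
    (hf : ∀ x ∈ Icc (0 : ℝ) 1, f x = q x) (hq₁ : q 1 = q 0 + 1)
    (hq : ∀ s t : ℝ, 0 ≤ s → s ≤ t → t ≤ 1 → t - s ≤ 2 * (q t - q s) ∧ q t - q s ≤ 2 * (t - s)) :
    LipschitzWith 2 f ∧ LipschitzWith 2 f.symm := by
  have hfP := apply_coe_eq_circleLift hf
  -- for `P = circleLift q`, slopes in `[1/2, 2]` mean `2x - P x` and `2P x - x` are monotone;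
  -- both are again lifts
  have h₁ : Monotone fun x => 2 * x - circleLift q x := by
    have : (fun x => 2 * x - circleLift q x) = circleLift (fun t => 2 * t - q t) := by
      funext x; simp only [circleLift, Int.fract]; ring
    rw [this]
    refine monotone_circleLift (fun s hs t ht hst => ?_) fun t ht => ?_
    · linarith [hq s t hs.1 hst ht.2.le]
    · linarith [hq t 1 ht.1 ht.2.le le_rfl]
  have h₂ : Monotone fun x => 2 * circleLift q x - x := by
    have : (fun x => 2 * circleLift q x - x) = circleLift (fun t => 2 * q t - t) := by
      funext x; simp only [circleLift, Int.fract]; ring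
    rw [this]
    refine monotone_circleLift (fun s hs t ht hst => ?_) fun t ht => ?_
    · linarith [hq s t hs.1 hst ht.2.le]
    · linarith [hq t 1 ht.1 ht.2.le le_rfl]
  have hP := abs_sub_le_mul_of_monotone two_pos h₁ h₂
  have hL : LipschitzWith 2 (circleLift q) :=
    LipschitzWith.of_dist_le_mul fun u v => by simpa [Real.dist_eq] using (hP u v).1
  have hA : AntilipschitzWith 2 (circleLift q) :=
    AntilipschitzWith.of_le_mul_dist fun u v => by simpa [Real.dist_eq] using (hP u v).2
  exact ⟨lipschitzWith_of_lift hfP hL,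
    (antilipschitzWith_of_lift hfP (circleLift_add_intCast q) hA).to_rightInverse
      f.apply_symm_apply⟩

lemma pl2_slopes {s t : ℝ} (hst : s ≤ t) :
    t - s ≤ 2 * (pl2 t - pl2 s) ∧ pl2 t - pl2 s ≤ 2 * (t - s) := by
  unfold pl2; split_ifs <;> constructor <;> linarith

lemma pl3_slopes {s t : ℝ} (hst : s ≤ t) :
    t - s ≤ 2 * (pl3 t - pl3 s) ∧ pl3 t - pl3 s ≤ 2 * (t - s) := by
  unfold pl3; split_ifs <;> constructor <;> linarith

lemma pl4_slopes {s t : ℝ} (hst : s ≤ t) :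
    t - s ≤ 2 * (pl4 t - pl4 s) ∧ pl4 t - pl4 s ≤ 2 * (t - s) := by
  unfold pl4; split_ifs <;> constructor <;> linarith

lemma pl2_one : pl2 1 = pl2 0 + 1 := by norm_num [pl2]
lemma pl3_one : pl3 1 = pl3 0 + 1 := by norm_num [pl3]
lemma pl4_one : pl4 1 = pl4 0 + 1 := by norm_num [pl4]

lemma pl2_eq_self_s9 {t : ℝ} (ht : 1 / 2 < t) : pl2 t = t := by
  rw [pl2, if_neg (by linarith), if_neg (by linarith)]

lemma pl3_eq_self {t : ℝ} (ht : t ≤ 5 / 8) : pl3 t = t := by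
  rw [pl3, if_pos ht]

lemma mem_hutch {G : Set (Circle1 ≃ₜ Circle1)} {A : Set Circle1} {p : Circle1} :
    p ∈ hutch G A ↔ ∃ g ∈ G, ∃ a ∈ A, g a = p := by
  simp only [hutch, mem_iUnion, mem_image, exists_prop]

lemma exists_dist_le_of_mem_hutch_iterate {G : Set (Circle1 ≃ₜ Circle1)} {K : NNReal}
    (hG : ∀ g ∈ G, LipschitzWith K g) (x y : Circle1) :
    ∀ (n : ℕ), ∀ p ∈ (hutch G)^[n] {x},
      ∃ q ∈ (hutch G)^[n] {y}, dist p q ≤ K ^ n * dist x y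
  | 0, p, hp => ⟨y, rfl, by rw [mem_singleton_iff.1 hp, pow_zero, one_mul]⟩
  | n + 1, p, hp => by
    rw [Function.iterate_succ_apply'] at hp ⊢
    obtain ⟨g, hg, p', hp', rfl⟩ := mem_hutch.1 hp
    obtain ⟨q', hq', hdist⟩ := exists_dist_le_of_mem_hutch_iterate hG x y n p' hp'
    refine ⟨g q', mem_hutch.2 ⟨g, hg, q', hq', rfl⟩, ?_⟩
    calc dist (g p') (g q') ≤ K * dist p' q' := (hG g hg).dist_le_mul p' q'
      _ ≤ K * (K ^ n * dist x y) := by gcongr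
      _ = K ^ (n + 1) * dist x y := by ring

lemma hausdorffDist_hutch_iterate_le {G : Set (Circle1 ≃ₜ Circle1)} {K : NNReal}
    (hG : ∀ g ∈ G, LipschitzWith K g) (n : ℕ) (x y : Circle1) :
    hausdorffDist ((hutch G)^[n] {x}) ((hutch G)^[n] {y}) ≤ K ^ n * dist x y :=
  hausdorffDist_le_of_mem_dist (by positivity)
    (exists_dist_le_of_mem_hutch_iterate hG x y n)
    (dist_comm x y ▸ exists_dist_le_of_mem_hutch_iterate hG y x n)

lemma add_nsmul_mem_hutch_iterate {G : Set (Circle1 ≃ₜ Circle1)} {a : Circle1}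
    (hrot : ∃ f ∈ G, ∀ z, f z = z + a) (hfix : ∀ z, ∃ g ∈ G, g z = z) (x : Circle1) :
    ∀ {n k : ℕ}, k ≤ n → x + k • a ∈ (hutch G)^[n] {x}
  | 0, k, hk => by simp [Nat.le_zero.1 hk]
  | n + 1, k, hk => by
    rw [Function.iterate_succ_apply']
    rcases Nat.lt_or_ge k (n + 1) with hlt | hge
    · obtain ⟨g, hg, hgz⟩ := hfix (x + k • a)
      exact mem_hutch.2 ⟨g, hg, _, add_nsmul_mem_hutch_iterate hrot hfix x
        (Nat.lt_succ_iff.1 hlt), hgz⟩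
    · obtain ⟨f, hf, hfz⟩ := hrot
      obtain rfl : k = n + 1 := le_antisymm hk hge
      refine mem_hutch.2 ⟨f, hf, _, add_nsmul_mem_hutch_iterate ⟨f, hf, hfz⟩ hfix x le_rfl, ?_⟩
      rw [hfz, succ_nsmul, add_assoc]

lemma exists_nsmul_dist_lt_of_denseRange {a : Circle1} (ha : DenseRange (· • a : ℤ → Circle1))
    {ε : ℝ} (hε : 0 < ε) : ∃ N : ℕ, ∀ z : Circle1, ∃ k ≤ N, dist z (k • a) < ε := by
  obtain ⟨t, ht⟩ := isCompact_univ.elim_finite_subcover (fun k : ℤ => ball (k • a) ε)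
    (fun _ => isOpen_ball) fun z _ => mem_iUnion.2 (ha.exists_dist_lt z hε)
  set M := t.sup Int.natAbs
  -- shifting by `M • a` turns the net `{k • a | |k| ≤ M}` into one of nonnegative multiples
  refine ⟨2 * M, fun z => ?_⟩
  obtain ⟨k, hk, hz⟩ := mem_iUnion₂.1 (ht (mem_univ (z - M • a)))
  have hkM : k.natAbs ≤ M := Finset.le_sup hk
  refine ⟨(k + M).toNat, by omega, ?_⟩
  have : ((k + M).toNat : ℤ) = k + M := Int.toNat_of_nonneg (by omega)
  rw [← natCast_zsmul, this, add_zsmul, natCast_zsmul]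
  rwa [mem_ball, ← dist_add_right _ _ (M • a), sub_add_cancel] at hz

theorem equicontinuousHutch_of_rotation {G : Set (Circle1 ≃ₜ Circle1)} {a : Circle1} {K : NNReal}
    (hrot : ∃ f ∈ G, ∀ z, f z = z + a) (ha : DenseRange (· • a : ℤ → Circle1))
    (hfix : ∀ z, ∃ g ∈ G, g z = z) (hG : ∀ g ∈ G, LipschitzWith K g) :
    EquicontinuousHutch G := by
  intro x ε hε
  obtain ⟨N, hN⟩ := exists_nsmul_dist_lt_of_denseRange ha (half_pos hε)
  set C : ℝ := max 1 (K : ℝ) ^ N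
  have hC : 0 < C := by positivity
  refine ⟨ε / 2 / C, by positivity, fun y hy => ?_⟩
  have hstep : ∀ n, hausdorffDist ((hutch G)^[n] {x}) ((hutch G)^[n] {y}) ≤ ε / 2 := by
    intro n
    rcases le_or_gt n N with hn | hn
    · have hKn : (K : ℝ) ^ n ≤ C := (pow_le_pow_left₀ K.coe_nonneg (le_max_right _ _) n).trans
        (pow_le_pow_right₀ (le_max_left _ _) hn)
      calc _ ≤ K ^ n * dist x y := hausdorffDist_hutch_iterate_le hG n x y
        _ ≤ C * (ε / 2 / C) := by gcongr
        _ = ε / 2 := mul_div_cancel₀ _ hC.ne'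
    -- after `N` steps both sets contain an `ε / 2`-net of rotated points
    · have hnet : ∀ w p, ∃ q ∈ (hutch G)^[n] {w}, dist p q ≤ ε / 2 := fun w p => by
        obtain ⟨k, hk, hd⟩ := hN (p - w)
        refine ⟨w + k • a, add_nsmul_mem_hutch_iterate hrot hfix w (by omega), ?_⟩
        rw [← dist_add_right _ _ w, sub_add_cancel, add_comm] at hd
        exact hd.le
      exact hausdorffDist_le_of_mem_dist (by positivity) (fun p _ => hnet y p)
        fun p _ => hnet x p
  exact (ciSup_le hstep).trans_lt (half_lt_self hε)

lemma denseRange_zsmul_coe_of_irrational {α : ℝ} (hα : Irrational α) :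
    DenseRange (· • (α : Circle1) : ℤ → Circle1) :=
  AddCircle.denseRange_zsmul_coe_iff.2 (by rwa [div_one])

lemma lipschitzWith_one_of_add_right {f : Circle1 → Circle1} {a : Circle1}
    (hf : ∀ z, f z = z + a) : LipschitzWith 1 f := by
  rw [show f = (· + a) from funext hf]
  exact (isometry_add_right a).lipschitz

lemma pl2_or_pl3_fixes {f₂ f₃ : Circle1 → Circle1}
    (hf₂ : ∀ x ∈ Icc (0:ℝ) 1, f₂ (x : Circle1) = ((pl2 x : ℝ) : Circle1))
    (hf₃ : ∀ x ∈ Icc (0:ℝ) 1, f₃ (x : Circle1) = ((pl3 x : ℝ) : Circle1)) (z : Circle1) :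
    f₂ z = z ∨ f₃ z = z := by
  induction z using QuotientAddGroup.induction_on with | H x => ?_
  have hx : Int.fract x ∈ Icc (0 : ℝ) 1 := ⟨Int.fract_nonneg x, (Int.fract_lt_one x).le⟩
  rw [← AddCircle.coe_fract, hf₂ _ hx, hf₃ _ hx]
  rcases le_or_gt (Int.fract x) (5 / 8) with h | h
  · exact .inr (by rw [pl3_eq_self h])
  · exact .inl (by rw [pl2_eq_self_s9 (by linarith)])

/-- In the same situation, the Hutchinson operators of both
`𝓕 = {f₁, f₂, f₃, f₄}` and `𝓕₋ = {f₁⁻¹, f₂⁻¹, f₃⁻¹, f₄⁻¹}` are equicontinuous. -/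
theorem stmt9 (α : ℝ) (hα : Irrational α)
    (f₁ f₂ f₃ f₄ : Circle1 ≃ₜ Circle1)
    (hf₁ : ∀ z : Circle1, f₁ z = z + (α : Circle1))
    (hf₂ : ∀ x ∈ Icc (0:ℝ) 1, f₂ (x : Circle1) = ((pl2 x : ℝ) : Circle1))
    (hf₃ : ∀ x ∈ Icc (0:ℝ) 1, f₃ (x : Circle1) = ((pl3 x : ℝ) : Circle1))
    (hf₄ : ∀ x ∈ Icc (0:ℝ) 1, f₄ (x : Circle1) = ((pl4 x : ℝ) : Circle1)) :
    EquicontinuousHutch {f₁, f₂, f₃, f₄} ∧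
      EquicontinuousHutch {f₁.symm, f₂.symm, f₃.symm, f₄.symm} := by
  have hL₂ := lipschitzWith_two_of_slopes hf₂ pl2_one fun _ _ _ hst _ => pl2_slopes hst
  have hL₃ := lipschitzWith_two_of_slopes hf₃ pl3_one fun _ _ _ hst _ => pl3_slopes hst
  have hL₄ := lipschitzWith_two_of_slopes hf₄ pl4_one fun _ _ _ hst _ => pl4_slopes hst
  have hf₁' : ∀ z, f₁.symm z = z + ((-α : ℝ) : Circle1) := fun z =>
    f₁.symm_apply_eq.2 (by rw [hf₁, AddCircle.coe_neg, neg_add_cancel_right])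
  have hfix := pl2_or_pl3_fixes hf₂ hf₃
  constructor
  · refine equicontinuousHutch_of_rotation (K := 2) ⟨f₁, by simp, hf₁⟩
      (denseRange_zsmul_coe_of_irrational hα) (fun z => ?_) ?_
    · rcases hfix z with h | h
      exacts [⟨f₂, by simp, h⟩, ⟨f₃, by simp, h⟩]
    · simp only [mem_insert_iff, mem_singleton_iff, forall_eq_or_imp, forall_eq]
      exact ⟨(lipschitzWith_one_of_add_right hf₁).weaken one_le_two, hL₂.1, hL₃.1, hL₄.1⟩
  · refine equicontinuousHutch_of_rotation (K := 2) ⟨f₁.symm, by simp, hf₁'⟩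
      (denseRange_zsmul_coe_of_irrational hα.neg) (fun z => ?_) ?_
    · rcases hfix z with h | h
      exacts [⟨f₂.symm, by simp, f₂.symm_apply_eq.2 h.symm⟩,
        ⟨f₃.symm, by simp, f₃.symm_apply_eq.2 h.symm⟩]
    · simp only [mem_insert_iff, mem_singleton_iff, forall_eq_or_imp, forall_eq]
      exact ⟨(lipschitzWith_one_of_add_right hf₁').weaken one_le_two, hL₂.2, hL₃.2, hL₄.2⟩
end
end
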